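/- For every slope μ, the full subcategory C^(μ) of C consisting of the zero object and the semistable objects of slope μ is an abelian category, is an exact subcategory of C, and is closed under extensions in C. -/

import Mathlib

open CategoryTheory Limits

universe v u v' u'

variable (C : Type u) [Category.{v} C] [Preadditive C] [HasZeroObject C]
  [HasBinaryBiproducts C]
variable (D : Type u') [Category.{v'} D] [Abelian D]
variable (F : C ⥤ D) [F.Additive] [F.Faithful]
variable (V : Type*) [AddCommGroup V] [LinearOrder V] [IsOrderedAddMonoid V]

/-- The data and axioms of abstract Harder–Narasimhan theory:
an exact structure on `C` (given by its class of short strict exact sequences),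
an exact faithful functor `F : C ⥤ D` inducing bijections between strict
subobjects and subobjects of the image, a rank function on `D` and a degree
function on `C`. -/
structure HNTheory where
  /-- `SSE f g` means `0 ⟶ A ⟶ B ⟶ Z ⟶ 0` is a short strict exact sequence. -/
  SSE : ∀ ⦃A B Z : C⦄, (A ⟶ B) → (B ⟶ Z) → Prop
  sse_comp_zero : ∀ ⦃A B Z : C⦄ (f : A ⟶ B) (g : B ⟶ Z), SSE f g → f ≫ g = 0
  sse_mono : ∀ ⦃A B Z : C⦄ (f : A ⟶ B) (g : B ⟶ Z), SSE f g → Mono f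
  sse_epi : ∀ ⦃A B Z : C⦄ (f : A ⟶ B) (g : B ⟶ Z), SSE f g → Epi g
  sse_isKernel : ∀ ⦃A B Z : C⦄ (f : A ⟶ B) (g : B ⟶ Z) (hfg : SSE f g),
    Nonempty (IsLimit (KernelFork.ofι f (sse_comp_zero f g hfg)))
  sse_isCokernel : ∀ ⦃A B Z : C⦄ (f : A ⟶ B) (g : B ⟶ Z) (hfg : SSE f g),
    Nonempty (IsColimit (CokernelCofork.ofπ g (sse_comp_zero f g hfg)))
  /-- `F` is exact. -/
  F_exact : ∀ ⦃A B Z : C⦄ (f : A ⟶ B) (g : B ⟶ Z) (hfg : SSE f g),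
    (ShortComplex.mk (F.map f) (F.map g)
      (by rw [← F.map_comp, sse_comp_zero f g hfg, F.map_zero])).ShortExact
  /-- `F` induces a bijection between strict subobjects of `X` and subobjects
  of `F(X)`. -/
  strict_sub_bij : ∀ X : C,
    Function.Bijective
      (fun S : {S : Subobject X // ∃ (Z : C) (g : X ⟶ Z), SSE S.arrow g} =>
        imageSubobject (F.map S.1.arrow))
  rk : D → ℕ
  rk_iso : ∀ ⦃X Y : D⦄, (X ≅ Y) → rk X = rk Y
  rk_eq_zero_iff : ∀ X : D, rk X = 0 ↔ IsZero X
  rk_additive : ∀ (S : ShortComplex D), S.ShortExact → rk S.X₂ = rk S.X₁ + rk S.X₃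
  deg : C → V
  deg_iso : ∀ ⦃X Y : C⦄, (X ≅ Y) → deg X = deg Y
  deg_additive : ∀ ⦃A B Z : C⦄ (f : A ⟶ B) (g : B ⟶ Z), SSE f g → deg B = deg A + deg Z
  deg_le_of_FIso : ∀ ⦃X Y : C⦄ (f : X ⟶ Y), IsIso (F.map f) → deg X ≤ deg Y
  deg_eq_iff_of_FIso : ∀ ⦃X Y : C⦄ (f : X ⟶ Y), IsIso (F.map f) → (deg X = deg Y ↔ IsIso f)

namespace HNTheory

variable {C D F V}

/-- The subobject `F(X') ⊆ F(X)` associated to a subobject `X' ⊆ X`. -/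
noncomputable def FSub (_h : HNTheory C D F V) {X : C} (S : Subobject X) :
    Subobject (F.obj X) :=
  imageSubobject (F.map S.arrow)

variable (h : HNTheory C D F V)

/-- The rank of an object of `C` is the rank of its image in `D`. -/
def rkC (X : C) : ℕ := h.rk (F.obj X)

/-- A subobject is strict if it is an admissible (strict) monomorphism,
i.e. fits in a short strict exact sequence. -/
def StrictSub {X : C} (S : Subobject X) : Prop :=
  ∃ (Z : C) (g : X ⟶ Z), h.SSE S.arrow g

/-- `μ(X) ≤ μ(Y)`, in cross-multiplied form `rk(Y) • deg(X) ≤ rk(X) • deg(Y)`. -/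
def muLE (X Y : C) : Prop := h.rkC Y • h.deg X ≤ h.rkC X • h.deg Y

/-- `μ(X) < μ(Y)`, in cross-multiplied form. -/
def muLT (X Y : C) : Prop := h.rkC Y • h.deg X < h.rkC X • h.deg Y

/-- `μ(X) = μ(Y)`, in cross-multiplied form. -/
def muEQ (X Y : C) : Prop := h.rkC Y • h.deg X = h.rkC X • h.deg Y

/-- A nonzero object is semistable if every nonzero proper subobject has
slope at most that of the ambient object. -/
def Semistable (X : C) : Prop :=
  ¬ IsZero X ∧ ∀ S : Subobject X, ¬ IsZero ((S : C)) → S ≠ ⊤ → h.muLE (S : C) X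

/-- A subobject of maximal slope. -/
def MaxSlopeSub {X : C} (S : Subobject X) : Prop :=
  ¬ IsZero ((S : C)) ∧ ∀ T : Subobject X, ¬ IsZero ((T : C)) → h.muLE (T : C) (S : C)

/-- `G` is (a model of) the `i`-th graded piece `c i.succ / c i.castSucc` of a
filtration `c` by strict subobjects. -/
def GrAt {X : C} {N : ℕ} (c : Fin (N + 1) → Subobject X) (i : Fin N) (G : C) : Prop :=
  ∃ (hle : c i.castSucc ≤ c i.succ) (p : ((c i.succ : Subobject X) : C) ⟶ G),
    h.SSE (Subobject.ofLE (c i.castSucc) (c i.succ) hle) p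

/-- `c` is a Harder–Narasimhan filtration. -/
def IsHNFilt {X : C} {N : ℕ} (c : Fin (N + 1) → Subobject X) : Prop :=
  StrictMono c ∧ c 0 = ⊥ ∧ c (Fin.last N) = ⊤ ∧ (∀ i, h.StrictSub (c i)) ∧
  (∀ (i : Fin N) (G : C), h.GrAt c i G → h.Semistable G) ∧
  (∀ (i j : Fin N), i < j → ∀ (Gi Gj : C),
    h.GrAt c i Gi → h.GrAt c j Gj → h.muLT Gj Gi)

end HNTheory

namespace HNTheory
variable {C D F V}
/-- The objects of `C^(μ)`: the zero objects together with the semistable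
objects of slope `μ = d / r`. -/
def SSOfSlope (h : HNTheory C D F V) (d : V) (r : ℕ) : C → Prop :=
  fun X => IsZero X ∨ (h.Semistable X ∧ r • h.deg X = h.rkC X • d)
end HNTheory

/-!
Put `τ X = r • deg X - rk X • d`. It is additive on short strict exact sequences, does not
decrease along morphisms inverted by `F`, and an object lies in `C^(μ)` exactly when `τ X = 0`
and `τ S ≤ 0` for every subobject `S` of `X`; in particular every `F`-epimorphic quotient `Q`
of an object of `C^(μ)` has `τ Q ≥ 0`. Closure under extensions follows: a subobject of an
extension of `Z` by `A` is an extension of a subobject of `Z` by a subobject of `A`.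

Lifting `ker F(f)` and `im F(f)` to strict subobjects factors any `f : A ⟶ B` as
`A ⟶ coim ⟶ im ⟶ B`, where `A ⟶ coim` is the strict cokernel of a kernel of `f`, `im ⟶ B` the
strict kernel of a cokernel of `f`, and `F(coim ⟶ im)` is an isomorphism. If `A` and `B` lie in
`C^(μ)`, then `coim` is both a quotient of `A` and a subobject of `B`, so `τ coim = 0`; since
`τ im ≤ 0`, the degree axiom makes `coim ⟶ im` an isomorphism, and additivity of `τ` puts the
kernel and the cokernel of `f` in `C^(μ)`. So `C^(μ)` is closed under kernels and cokernels, and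
in it a monomorphism (epimorphism) has zero kernel (cokernel), hence is the kernel of its
cokernel (cokernel of its kernel): `C^(μ)` is abelian.
-/

section

variable {𝒜 : Type*} [Category 𝒜] [Abelian 𝒜]

theorem CategoryTheory.ShortComplex.Exact.mono_of_isColimit_cokernelCofork
    {S : ShortComplex 𝒜} (hS : S.Exact) {Z : 𝒜} {p : S.X₂ ⟶ Z} {hp : S.f ≫ p = 0}
    (hc : IsColimit (CokernelCofork.ofπ p hp)) {g : Z ⟶ S.X₃} (hg : p ≫ g = S.g) : Mono g := by
  let e : Z ≅ cokernel S.f := IsColimit.coconePointUniqueUpToIso hc (colimit.isColimit _)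
  have hpe : p ≫ e.hom = cokernel.π S.f :=
    IsColimit.comp_coconePointUniqueUpToIso_hom hc _ WalkingParallelPair.one
  have : Epi p := Cofork.IsColimit.epi hc
  have he : g = e.hom ≫ cokernel.desc S.f S.g S.zero := by
    rw [← cancel_epi p, hg, reassoc_of% hpe, cokernel.π_desc]
  have := hS.mono_cokernelDesc
  rw [he]
  infer_instance

end

theorem CategoryTheory.Functor.isZero_obj_iff {𝒜 ℬ : Type*} [Category 𝒜] [Category ℬ]
    [HasZeroMorphisms 𝒜] [HasZeroMorphisms ℬ] (G : 𝒜 ⥤ ℬ) [G.PreservesZeroMorphisms]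
    [G.Faithful] (X : 𝒜) : IsZero (G.obj X) ↔ IsZero X := by
  rw [IsZero.iff_id_eq_zero, IsZero.iff_id_eq_zero, ← G.map_id, ← G.map_zero,
    G.map_injective.eq_iff]

namespace HNTheory

section

variable {C : Type u} [Category.{v} C] [Preadditive C] {D : Type u'} [Category.{v'} D] [Abelian D]
  {F : C ⥤ D} [F.Additive] {V : Type*} [AddCommGroup V] [LinearOrder V] (h : HNTheory C D F V)

section SSE

variable {A B Z : C} {f : A ⟶ B} {g : B ⟶ Z}

theorem mono_map_of_sse (hfg : h.SSE f g) : Mono (F.map f) := (h.F_exact f g hfg).mono_f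

theorem epi_map_of_sse (hfg : h.SSE f g) : Epi (F.map g) := (h.F_exact f g hfg).epi_g

theorem rkC_of_sse (hfg : h.SSE f g) : h.rkC B = h.rkC A + h.rkC Z :=
  h.rk_additive _ (h.F_exact f g hfg)

end SSE

theorem rkC_eq_of_isIso_map {X Y : C} (f : X ⟶ Y) [IsIso (F.map f)] : h.rkC X = h.rkC Y :=
  h.rk_iso (asIso (F.map f))

theorem exists_sse_map_eq {X : C} {G : D} (m : G ⟶ F.obj X) [Mono m] :
    ∃ (S Z : C) (s : S ⟶ X) (g : X ⟶ Z) (e : F.obj S ≅ G), h.SSE s g ∧ F.map s = e.hom ≫ m := by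
  obtain ⟨⟨T, Z, g, hT⟩, hTm⟩ := (h.strict_sub_bij X).2 (Subobject.mk m)
  have := h.mono_map_of_sse hT
  simp only [imageSubobject_mono] at hTm
  exact ⟨_, Z, T.arrow, g, Subobject.isoOfMkEqMk _ _ hTm, hT, by simp⟩

structure StrictFactorization {A B : C} (f : A ⟶ B) where
  {K coim im W : C}
  k : K ⟶ A
  p : A ⟶ coim
  w : coim ⟶ im
  i : im ⟶ B
  q : B ⟶ W
  sse_kp : h.SSE k p
  sse_iq : h.SSE i q
  fac : p ≫ w ≫ i = f
  isIso_map_w : IsIso (F.map w)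
  k_comp : k ≫ f = 0
  comp_q : f ≫ q = 0
  isLimit : IsLimit (KernelFork.ofι k k_comp)
  isColimit : IsColimit (CokernelCofork.ofπ q comp_q)

variable (d : V) (r : ℕ)

/-- `r • deg X - rk X • d`, which is `≤ 0`, `= 0` or `≥ 0` according as the slope of a nonzero `X`
is `≤`, `=` or `≥ d / r`. -/
def twistedDeg (X : C) : V := r • h.deg X - h.rkC X • d

theorem twistedDeg_of_sse {A B Z : C} {f : A ⟶ B} {g : B ⟶ Z} (hfg : h.SSE f g) :
    h.twistedDeg d r B = h.twistedDeg d r A + h.twistedDeg d r Z := by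
  simp only [twistedDeg, h.deg_additive f g hfg, h.rkC_of_sse hfg, smul_add, add_smul]
  abel

theorem twistedDeg_eq_zero_iff {X : C} : h.twistedDeg d r X = 0 ↔ r • h.deg X = h.rkC X • d :=
  sub_eq_zero

section

variable [IsOrderedAddMonoid V]

theorem twistedDeg_le_of_isIso_map {X Y : C} (f : X ⟶ Y) [IsIso (F.map f)] :
    h.twistedDeg d r X ≤ h.twistedDeg d r Y := by
  rw [twistedDeg, twistedDeg, h.rkC_eq_of_isIso_map f]
  exact sub_le_sub_right (nsmul_le_nsmul_right (h.deg_le_of_FIso f inferInstance) r) _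

theorem twistedDeg_eq_of_iso {X Y : C} (e : X ≅ Y) : h.twistedDeg d r X = h.twistedDeg d r Y :=
  (h.twistedDeg_le_of_isIso_map d r e.hom).antisymm (h.twistedDeg_le_of_isIso_map d r e.inv)

theorem isIso_of_isIso_map_of_twistedDeg_le (hr : 0 < r) {X Y : C} (f : X ⟶ Y) [IsIso (F.map f)]
    (hle : h.twistedDeg d r Y ≤ h.twistedDeg d r X) : IsIso f := by
  rw [twistedDeg, twistedDeg, h.rkC_eq_of_isIso_map f, sub_le_sub_iff_right,
    nsmul_le_nsmul_iff_right hr.ne'] at hle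
  exact (h.deg_eq_iff_of_FIso f inferInstance).1 ((h.deg_le_of_FIso f inferInstance).antisymm hle)

end

variable [F.Faithful]

theorem rkC_eq_zero_iff (X : C) : h.rkC X = 0 ↔ IsZero X :=
  (h.rk_eq_zero_iff _).trans (F.isZero_obj_iff X)

theorem mono_map_of_mono (h : HNTheory C D F V) {S X : C} (s : S ⟶ X) [Mono s] :
    Mono (F.map s) := by
  obtain ⟨K, -, k, -, e, -, hk⟩ := h.exists_sse_map_eq (kernel.ι (F.map s))
  have hk0 : k = 0 := by
    rw [← cancel_mono s, zero_comp]
    exact F.map_injective (by simp [hk])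
  apply Abelian.mono_of_kernel_ι_eq_zero
  rw [← cancel_epi e.hom, ← hk, hk0, F.map_zero, comp_zero]

theorem deg_eq_zero_of_isZero {X : C} (hX : IsZero X) : h.deg X = 0 := by
  obtain ⟨S, Z, s, g, -, hsg, -⟩ := h.exists_sse_map_eq (𝟙 (F.obj X))
  have hrk := h.rkC_of_sse hsg
  rw [(h.rkC_eq_zero_iff X).2 hX, eq_comm, Nat.add_eq_zero_iff, h.rkC_eq_zero_iff,
    h.rkC_eq_zero_iff] at hrk
  have hdeg := h.deg_additive s g hsg
  rwa [h.deg_iso (hrk.1.iso hX), h.deg_iso (hrk.2.iso hX), left_eq_add] at hdeg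

theorem exists_sse_fac_mono_map {A B : C} (f : A ⟶ B) :
    ∃ (K Z : C) (k : K ⟶ A) (p : A ⟶ Z) (f' : Z ⟶ B) (hk : k ≫ f = 0),
      h.SSE k p ∧ p ≫ f' = f ∧ Mono (F.map f') ∧ Nonempty (IsLimit (KernelFork.ofι k hk)) := by
  obtain ⟨K, Z, k, p, e, hkp, hFk⟩ := h.exists_sse_map_eq (kernel.ι (F.map f))
  have hk : k ≫ f = 0 := F.map_injective (by simp [hFk])
  obtain ⟨f', hf'⟩ := CokernelCofork.IsColimit.desc' (h.sse_isCokernel k p hkp).some f hk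
  rw [Cofork.π_ofπ] at hf'
  have hexact : (ShortComplex.mk (F.map k) (F.map f) (by simp [← F.map_comp, hk])).Exact := by
    rw [ShortComplex.exact_iff_epi_kernel_lift]
    have he : kernel.lift (F.map f) (F.map k) (by simp [← F.map_comp, hk]) = e.hom := by
      rw [← cancel_mono (kernel.ι _), kernel.lift_ι, hFk]
    dsimp
    rw [he]
    infer_instance
  have hmono : Mono (F.map f') :=
    hexact.mono_of_isColimit_cokernelCofork (h.F_exact k p hkp).gIsCokernel
      ((F.map_comp p f').symm.trans (congrArg F.map hf'))
  have : Mono f' := F.mono_of_mono_map hmono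
  have := h.sse_mono k p hkp
  refine ⟨K, Z, k, p, f', hk, hkp, hf', hmono, ⟨KernelFork.IsLimit.ofι' k hk fun t ht => ?_⟩⟩
  exact KernelFork.IsLimit.lift' (h.sse_isKernel k p hkp).some t
    (by rw [← cancel_mono f', Category.assoc, hf', ht, zero_comp])

theorem exists_sse_fac_epi_map {A B : C} (f : A ⟶ B) :
    ∃ (B' W : C) (f' : A ⟶ B') (i : B' ⟶ B) (q : B ⟶ W) (hq : f ≫ q = 0),
      h.SSE i q ∧ f' ≫ i = f ∧ Epi (F.map f') ∧ Nonempty (IsColimit (CokernelCofork.ofπ q hq)) := by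
  obtain ⟨B', W, i, q, e, hiq, hFi⟩ := h.exists_sse_map_eq (Abelian.image.ι (F.map f))
  have hq : f ≫ q = 0 := by
    have : Abelian.image.ι (F.map f) ≫ F.map q = 0 := by
      rw [← cancel_epi e.hom, ← Category.assoc, ← hFi, ← F.map_comp, h.sse_comp_zero i q hiq,
        F.map_zero, comp_zero]
    exact F.map_injective (by simpa using this)
  obtain ⟨f', hf'⟩ := KernelFork.IsLimit.lift' (h.sse_isKernel i q hiq).some f hq
  rw [Fork.ι_ofι] at hf'
  have hepi : Epi (F.map f') := by
    have : F.map f' ≫ e.hom = Abelian.factorThruImage (F.map f) := by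
      rw [← cancel_mono (Abelian.image.ι (F.map f)), Abelian.image.fac, Category.assoc, ← hFi,
        ← F.map_comp]
      simpa using congrArg F.map hf'
    rw [← Iso.eq_comp_inv] at this
    rw [this]
    infer_instance
  have := h.sse_epi i q hiq
  refine ⟨B', W, f', i, q, hq, hiq, hf', hepi, ⟨CokernelCofork.IsColimit.ofπ' q hq fun t ht => ?_⟩⟩
  refine CokernelCofork.IsColimit.desc' (h.sse_isCokernel i q hiq).some t ?_
  apply F.map_injective
  rw [← cancel_epi (F.map f'), F.map_zero, comp_zero, ← F.map_comp, ← Category.assoc, hf', ht,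
    F.map_zero]

theorem nonempty_strictFactorization {A B : C} (f : A ⟶ B) :
    Nonempty (h.StrictFactorization f) := by
  obtain ⟨K, Z, k, p, f₁, hk, hkp, hpf, hmono, ⟨hker⟩⟩ := h.exists_sse_fac_mono_map f
  obtain ⟨B', W, f₂, i, q, hq, hiq, hfi, hepi, ⟨hcoker⟩⟩ := h.exists_sse_fac_epi_map f
  have := h.epi_map_of_sse hkp
  have := h.sse_mono i q hiq
  have hf₁q : f₁ ≫ q = 0 := by
    apply F.map_injective
    rw [← cancel_epi (F.map p), ← F.map_comp, ← F.map_comp, reassoc_of% hpf, hq, comp_zero]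
  obtain ⟨w, hw⟩ := KernelFork.IsLimit.lift' (h.sse_isKernel i q hiq).some f₁ hf₁q
  rw [Fork.ι_ofι] at hw
  have : Mono (F.map w) :=
    mono_of_mono_fac (show F.map w ≫ F.map i = F.map f₁ by rw [← F.map_comp, hw])
  have : Epi (F.map w) := by
    have hpw : p ≫ w = f₂ := by rw [← cancel_mono i, Category.assoc, hw, hpf, hfi]
    exact epi_of_epi_fac (show F.map p ≫ F.map w = F.map f₂ by rw [← F.map_comp, hpw])
  exact ⟨{ k, p, w, i, q
           sse_kp := hkp
           sse_iq := hiq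
           fac := by rw [hw, hpf]
           isIso_map_w := isIso_of_mono_of_epi _
           k_comp := hk
           comp_q := hq
           isLimit := hker
           isColimit := hcoker }⟩

theorem twistedDeg_eq_zero_of_isZero {X : C} (hX : IsZero X) : h.twistedDeg d r X = 0 := by
  simp [twistedDeg, h.deg_eq_zero_of_isZero hX, (h.rkC_eq_zero_iff X).2 hX]

variable [IsOrderedAddMonoid V]

theorem muLE_iff_twistedDeg_nonpos (hr : 0 < r) {S X : C} (hX : ¬ IsZero X)
    (hX₀ : h.twistedDeg d r X = 0) : h.muLE S X ↔ h.twistedDeg d r S ≤ 0 := by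
  rw [twistedDeg_eq_zero_iff] at hX₀
  have hrk : 0 < h.rkC X := Nat.pos_of_ne_zero (mt (h.rkC_eq_zero_iff X).1 hX)
  calc h.muLE S X ↔ r • (h.rkC X • h.deg S) ≤ r • (h.rkC S • h.deg X) :=
        (smul_le_smul_iff_of_pos_left hr).symm
    _ ↔ h.rkC X • (r • h.deg S) ≤ h.rkC X • (h.rkC S • d) := by
        rw [smul_comm r (h.rkC X), smul_comm r (h.rkC S), hX₀, smul_comm (h.rkC S)]
    _ ↔ h.twistedDeg d r S ≤ 0 := by
        rw [smul_le_smul_iff_of_pos_left hrk, twistedDeg, sub_nonpos]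

theorem twistedDeg_nonpos_of_mono (hr : 0 < r) {S X : C} (hX : h.Semistable X)
    (hX₀ : h.twistedDeg d r X = 0) (s : S ⟶ X) [Mono s] : h.twistedDeg d r S ≤ 0 := by
  by_cases hS : IsZero S
  · exact (h.twistedDeg_eq_zero_of_isZero d r hS).le
  by_cases htop : Subobject.mk s = ⊤
  · have := (Subobject.isIso_iff_mk_eq_top s).2 htop
    exact hX₀ ▸ h.twistedDeg_le_of_isIso_map d r s
  · let e := Subobject.underlyingIso s
    refine (h.twistedDeg_le_of_isIso_map d r e.inv).trans ?_
    exact (h.muLE_iff_twistedDeg_nonpos d r hr hX.1 hX₀).1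
      (hX.2 _ (fun hz => hS (hz.of_iso e.symm)) htop)

theorem ssOfSlope_iff (hr : 0 < r) {X : C} :
    h.SSOfSlope d r X ↔
      h.twistedDeg d r X = 0 ∧ ∀ ⦃S : C⦄ (s : S ⟶ X) [Mono s], h.twistedDeg d r S ≤ 0 := by
  constructor
  · rintro (hX | ⟨hss, hX⟩)
    · exact ⟨h.twistedDeg_eq_zero_of_isZero d r hX,
        fun S s _ => (h.twistedDeg_eq_zero_of_isZero d r (hX.of_mono s)).le⟩
    · rw [← twistedDeg_eq_zero_iff] at hX
      exact ⟨hX, fun S s _ => h.twistedDeg_nonpos_of_mono d r hr hss hX s⟩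
  · rintro ⟨hX, hsub⟩
    by_cases hX0 : IsZero X
    · exact Or.inl hX0
    refine Or.inr ⟨⟨hX0, fun T _ _ => ?_⟩, (h.twistedDeg_eq_zero_iff d r).1 hX⟩
    exact (h.muLE_iff_twistedDeg_nonpos d r hr hX0 hX).2 (hsub T.arrow)

theorem isClosedUnderIsomorphisms_ssOfSlope (hr : 0 < r) :
    ObjectProperty.IsClosedUnderIsomorphisms (h.SSOfSlope d r) where
  of_iso e hX := by
    rw [ssOfSlope_iff _ _ _ hr] at hX ⊢
    exact ⟨h.twistedDeg_eq_of_iso d r e ▸ hX.1, fun S s _ => hX.2 (s ≫ e.inv)⟩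

theorem ssOfSlope_of_mono (hr : 0 < r) {K A : C} (hA : h.SSOfSlope d r A) (k : K ⟶ A) [Mono k]
    (hK : h.twistedDeg d r K = 0) : h.SSOfSlope d r K :=
  (h.ssOfSlope_iff d r hr).2 ⟨hK, fun _ s _ => ((h.ssOfSlope_iff d r hr).1 hA).2 (s ≫ k)⟩

theorem twistedDeg_nonneg_of_epi_map (hr : 0 < r) {X Q : C} (hX : h.SSOfSlope d r X)
    (g : X ⟶ Q) [Epi (F.map g)] : 0 ≤ h.twistedDeg d r Q := by
  obtain ⟨K, Z, k, p, g', -, hkp, hpg, hmono, -⟩ := h.exists_sse_fac_mono_map g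
  have : Epi (F.map g') :=
    epi_of_epi_fac (show F.map p ≫ F.map g' = F.map g by rw [← F.map_comp, hpg])
  have : IsIso (F.map g') := isIso_of_mono_of_epi _
  have := h.sse_mono k p hkp
  rw [ssOfSlope_iff _ _ _ hr] at hX
  have hKZ := h.twistedDeg_of_sse d r hkp
  rw [hX.1, eq_comm, add_eq_zero_iff_eq_neg'] at hKZ
  calc 0 ≤ h.twistedDeg d r Z := hKZ ▸ neg_nonneg.2 (hX.2 k)
    _ ≤ h.twistedDeg d r Q := h.twistedDeg_le_of_isIso_map d r g'

theorem ssOfSlope_of_epi_map (hr : 0 < r) {B W : C} (hB : h.SSOfSlope d r B) (g : B ⟶ W)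
    [Epi (F.map g)] (hW : h.twistedDeg d r W = 0) : h.SSOfSlope d r W := by
  refine (h.ssOfSlope_iff d r hr).2 ⟨hW, fun S s _ => ?_⟩
  obtain ⟨S', Q, u, s', q, -, hs'q, hus', hepi, -⟩ := h.exists_sse_fac_epi_map s
  have := h.mono_map_of_mono s
  have : Mono (F.map u) :=
    mono_of_mono_fac (show F.map u ≫ F.map s' = F.map s by rw [← F.map_comp, hus'])
  have : IsIso (F.map u) := isIso_of_mono_of_epi _
  have : Epi (F.map (g ≫ q)) := by
    have := h.epi_map_of_sse hs'q
    rw [F.map_comp]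
    infer_instance
  have hQ := h.twistedDeg_nonneg_of_epi_map d r hr hB (g ≫ q)
  have hS'Q := h.twistedDeg_of_sse d r hs'q
  rw [hW, eq_comm, add_eq_zero_iff_eq_neg] at hS'Q
  calc h.twistedDeg d r S ≤ h.twistedDeg d r S' := h.twistedDeg_le_of_isIso_map d r u
    _ ≤ 0 := hS'Q ▸ neg_nonpos.2 hQ

theorem ssOfSlope_of_sse (hr : 0 < r) {A B Z : C} {f : A ⟶ B} {g : B ⟶ Z} (hfg : h.SSE f g)
    (hA : h.SSOfSlope d r A) (hZ : h.SSOfSlope d r Z) : h.SSOfSlope d r B := by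
  rw [ssOfSlope_iff _ _ _ hr] at hA hZ ⊢
  refine ⟨by rw [h.twistedDeg_of_sse d r hfg, hA.1, hZ.1, add_zero], fun S s _ => ?_⟩
  obtain ⟨K, Q, k, p, g', hk, hkp, hpg, hmono, -⟩ := h.exists_sse_fac_mono_map (s ≫ g)
  have : Mono g' := F.mono_of_mono_map hmono
  obtain ⟨u, hu⟩ := KernelFork.IsLimit.lift' (h.sse_isKernel f g hfg).some (k ≫ s)
    (by rw [Category.assoc, hk])
  rw [Fork.ι_ofι] at hu
  have := h.sse_mono k p hkp
  have : Mono u := mono_of_mono_fac hu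
  rw [h.twistedDeg_of_sse d r hkp]
  exact add_nonpos (hA.2 u) (hZ.2 g')

theorem ssOfSlope_biprod (hr : 0 < r) {X Y : C} [HasBinaryBiproduct X Y] (hX : h.SSOfSlope d r X)
    (hY : h.SSOfSlope d r Y) : h.SSOfSlope d r (X ⊞ Y) := by
  have := h.isClosedUnderIsomorphisms_ssOfSlope d r hr
  obtain ⟨K, Z, k, p, g', _, hkp, hpg, hmono, ⟨hker⟩⟩ :=
    h.exists_sse_fac_mono_map (biprod.snd : X ⊞ Y ⟶ Y)
  have : Mono g' := F.mono_of_mono_map hmono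
  have : IsSplitEpi g' := ⟨⟨biprod.inr ≫ p, by rw [Category.assoc, hpg, biprod.inr_snd]⟩⟩
  have : IsIso g' := isIso_of_mono_of_isSplitEpi g'
  refine h.ssOfSlope_of_sse d r hr hkp ?_ (ObjectProperty.prop_of_iso _ (asIso g').symm hY)
  exact ObjectProperty.prop_of_iso _
    (IsLimit.conePointUniqueUpToIso (biprod.isKernelSndKernelFork X Y) hker) hX

namespace StrictFactorization

variable {h} {d r} {A B : C} {f : A ⟶ B} (φ : h.StrictFactorization f)

theorem twistedDeg_coim_eq_zero (hr : 0 < r) (hA : h.SSOfSlope d r A)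
    (hB : h.SSOfSlope d r B) : h.twistedDeg d r φ.coim = 0 := by
  have := φ.isIso_map_w
  have := h.mono_map_of_sse φ.sse_iq
  have : Mono (φ.w ≫ φ.i) := F.mono_of_mono_map (by rw [F.map_comp]; infer_instance)
  have := h.epi_map_of_sse φ.sse_kp
  exact le_antisymm (((h.ssOfSlope_iff d r hr).1 hB).2 (φ.w ≫ φ.i))
    (h.twistedDeg_nonneg_of_epi_map d r hr hA φ.p)

theorem isIso_w (hr : 0 < r) (hA : h.SSOfSlope d r A)
    (hB : h.SSOfSlope d r B) : IsIso φ.w := by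
  have := φ.isIso_map_w
  have := h.sse_mono _ _ φ.sse_iq
  refine h.isIso_of_isIso_map_of_twistedDeg_le d r hr φ.w ?_
  rw [φ.twistedDeg_coim_eq_zero hr hA hB]
  exact ((h.ssOfSlope_iff d r hr).1 hB).2 φ.i

theorem ssOfSlope_K (hr : 0 < r) (hA : h.SSOfSlope d r A)
    (hB : h.SSOfSlope d r B) : h.SSOfSlope d r φ.K := by
  have := h.sse_mono _ _ φ.sse_kp
  refine h.ssOfSlope_of_mono d r hr hA φ.k ?_
  have := h.twistedDeg_of_sse d r φ.sse_kp
  rwa [((h.ssOfSlope_iff d r hr).1 hA).1, φ.twistedDeg_coim_eq_zero hr hA hB, add_zero,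
    eq_comm] at this

theorem ssOfSlope_W (hr : 0 < r) (hA : h.SSOfSlope d r A)
    (hB : h.SSOfSlope d r B) : h.SSOfSlope d r φ.W := by
  have := h.epi_map_of_sse φ.sse_iq
  refine h.ssOfSlope_of_epi_map d r hr hB φ.q ?_
  have := φ.isIso_w hr hA hB
  have := h.twistedDeg_of_sse d r φ.sse_iq
  rwa [((h.ssOfSlope_iff d r hr).1 hB).1, ← h.twistedDeg_eq_of_iso d r (asIso φ.w),
    φ.twistedDeg_coim_eq_zero hr hA hB, zero_add, eq_comm] at this

end StrictFactorization

theorem isClosedUnderKernels_ssOfSlope (hr : 0 < r) :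
    ObjectProperty.IsClosedUnderKernels (h.SSOfSlope d r) where
  kernels_le := by
    rintro _ ⟨f, c, hc, hX, hY⟩
    have := h.isClosedUnderIsomorphisms_ssOfSlope d r hr
    let φ := (h.nonempty_strictFactorization f).some
    exact ObjectProperty.prop_of_iso _ (IsLimit.conePointUniqueUpToIso φ.isLimit hc)
      (φ.ssOfSlope_K hr hX hY)

theorem isClosedUnderCokernels_ssOfSlope (hr : 0 < r) :
    ObjectProperty.IsClosedUnderCokernels (h.SSOfSlope d r) where
  cokernels_le := by
    rintro _ ⟨f, c, hc, hX, hY⟩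
    have := h.isClosedUnderIsomorphisms_ssOfSlope d r hr
    let φ := (h.nonempty_strictFactorization f).some
    exact ObjectProperty.prop_of_iso _ (IsColimit.coconePointUniqueUpToIso φ.isColimit hc)
      (φ.ssOfSlope_W hr hX hY)

theorem hasKernels_fullSubcategory (hr : 0 < r) :
    HasKernels (ObjectProperty.FullSubcategory (h.SSOfSlope d r)) where
  has_limit f := by
    have := h.isClosedUnderKernels_ssOfSlope d r hr
    have : HasKernel f.hom := HasLimit.mk ⟨_, (h.nonempty_strictFactorization f.hom).some.isLimit⟩
    let := ObjectProperty.createsKernels _ f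
    have := ObjectProperty.hasLimit_parallelPair_comp_ι _ f
    exact hasLimit_of_created _ (ObjectProperty.ι _)

theorem hasCokernels_fullSubcategory (hr : 0 < r) :
    HasCokernels (ObjectProperty.FullSubcategory (h.SSOfSlope d r)) where
  has_colimit f := by
    have := h.isClosedUnderCokernels_ssOfSlope d r hr
    have : HasCokernel f.hom :=
      HasColimit.mk ⟨_, (h.nonempty_strictFactorization f.hom).some.isColimit⟩
    let := ObjectProperty.createsCokernels _ f
    have := ObjectProperty.hasColimit_parallelPair_comp_ι _ f
    exact hasColimit_of_created _ (ObjectProperty.ι _)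

theorem isNormalMonoCategory_fullSubcategory (hr : 0 < r) :
    IsNormalMonoCategory (ObjectProperty.FullSubcategory (h.SSOfSlope d r)) where
  normalMonoOfMono {X Y} f _ := by
    let φ := (h.nonempty_strictFactorization f.hom).some
    have hk : φ.k = 0 := by
      let K : ObjectProperty.FullSubcategory (h.SSOfSlope d r) := ⟨φ.K, φ.ssOfSlope_K hr X.2 Y.2⟩
      have : (ObjectProperty.homMk φ.k : K ⟶ X) = 0 := by
        rw [← cancel_mono f]
        ext
        simpa using φ.k_comp
      exact congrArg (·.hom) this
    have : IsIso φ.p := CokernelCofork.IsColimit.isIso_π _ (h.sse_isCokernel _ _ φ.sse_kp).some hk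
    have := φ.isIso_w hr X.2 Y.2
    have hc : IsLimit (KernelFork.ofι f.hom φ.comp_q) :=
      IsLimit.ofIsoLimit (h.sse_isKernel _ _ φ.sse_iq).some
        (Fork.ext (asIso (φ.p ≫ φ.w)).symm (by simp [φ.fac]))
    exact ⟨{ Z := ⟨φ.W, φ.ssOfSlope_W hr X.2 Y.2⟩
             g := ObjectProperty.homMk φ.q
             w := by ext; exact φ.comp_q
             isLimit := isLimitOfReflects (ObjectProperty.ι _)
               ((KernelFork.isLimitMapConeEquiv _ _).symm hc) }⟩

theorem isNormalEpiCategory_fullSubcategory (hr : 0 < r) :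
    IsNormalEpiCategory (ObjectProperty.FullSubcategory (h.SSOfSlope d r)) where
  normalEpiOfEpi {X Y} f _ := by
    let φ := (h.nonempty_strictFactorization f.hom).some
    have hq : φ.q = 0 := by
      let W : ObjectProperty.FullSubcategory (h.SSOfSlope d r) := ⟨φ.W, φ.ssOfSlope_W hr X.2 Y.2⟩
      have : (ObjectProperty.homMk φ.q : Y ⟶ W) = 0 := by
        rw [← cancel_epi f]
        ext
        simpa using φ.comp_q
      exact congrArg (·.hom) this
    have : IsIso φ.i := KernelFork.IsLimit.isIso_ι _ (h.sse_isKernel _ _ φ.sse_iq).some hq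
    have := φ.isIso_w hr X.2 Y.2
    have hc : IsColimit (CokernelCofork.ofπ f.hom φ.k_comp) :=
      IsColimit.ofIsoColimit (h.sse_isCokernel _ _ φ.sse_kp).some
        (Cofork.ext (asIso (φ.w ≫ φ.i)) (by simp [φ.fac]))
    exact ⟨{ W := ⟨φ.K, φ.ssOfSlope_K hr X.2 Y.2⟩
             g := ObjectProperty.homMk φ.k
             w := by ext; exact φ.k_comp
             isColimit := isColimitOfReflects (ObjectProperty.ι _)
               ((CokernelCofork.isColimitMapCoconeEquiv _ _).symm hc) }⟩

variable [HasZeroObject C] [HasBinaryBiproducts C]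

theorem hasFiniteProducts_fullSubcategory (hr : 0 < r) :
    HasFiniteProducts (ObjectProperty.FullSubcategory (h.SSOfSlope d r)) := by
  have := h.isClosedUnderIsomorphisms_ssOfSlope d r hr
  have : ObjectProperty.ContainsZero (h.SSOfSlope d r) :=
    ⟨HasZeroObject.zero.imp fun _ hZ => ⟨hZ, Or.inl hZ⟩⟩
  have : ObjectProperty.IsClosedUnderBinaryProducts (h.SSOfSlope d r) :=
    ObjectProperty.IsClosedUnderLimitsOfShape.mk' (by
      rintro _ ⟨G, hG⟩
      exact ObjectProperty.prop_of_iso _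
        ((biprod.isoProd _ _).trans (HasLimit.isoOfNatIso (diagramIsoPair G)).symm)
        (h.ssOfSlope_biprod d r hr (hG _) (hG _)))
  have : HasFiniteProducts C := hasFiniteProducts_of_has_binary_and_terminal
  have := ObjectProperty.IsClosedUnderFiniteProducts.mk' (P := h.SSOfSlope d r)
  infer_instance

abbrev abelianFullSubcategory (hr : 0 < r) :
    Abelian (ObjectProperty.FullSubcategory (h.SSOfSlope d r)) :=
  have := h.hasFiniteProducts_fullSubcategory d r hr
  have := h.hasKernels_fullSubcategory d r hr
  have := h.hasCokernels_fullSubcategory d r hr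
  { toPreadditive := inferInstance
    toIsNormalMonoCategory := h.isNormalMonoCategory_fullSubcategory d r hr
    toIsNormalEpiCategory := h.isNormalEpiCategory_fullSubcategory d r hr }

end

end HNTheory

/-- (4.12) For every slope `μ = d / r`, the full subcategory `C^(μ)` of
semistable objects of slope `μ` (together with zero) is abelian, is an exact
subcategory of `C` (kernels and cokernels of morphisms between its objects,
computed in `C`, again lie in it), and is closed under extensions in `C`. -/
theorem stmt14 (h : HNTheory C D F V) (d : V) (r : ℕ) (hr : 0 < r) :
    Nonempty (Abelian (ObjectProperty.FullSubcategory (h.SSOfSlope d r))) ∧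
    (∀ ⦃A B Z : C⦄ (f : A ⟶ B) (g : B ⟶ Z), h.SSE f g →
      h.SSOfSlope d r A → h.SSOfSlope d r Z → h.SSOfSlope d r B) ∧
    (∀ ⦃A B : C⦄, h.SSOfSlope d r A → h.SSOfSlope d r B → ∀ (f : A ⟶ B),
      (∀ (K : C) (k : K ⟶ A) (hk : k ≫ f = 0),
        Nonempty (IsLimit (KernelFork.ofι k hk)) → h.SSOfSlope d r K) ∧
      (∀ (Q : C) (q : B ⟶ Q) (hq : f ≫ q = 0),
        Nonempty (IsColimit (CokernelCofork.ofπ q hq)) → h.SSOfSlope d r Q)) := by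
  have := h.isClosedUnderKernels_ssOfSlope d r hr
  have := h.isClosedUnderCokernels_ssOfSlope d r hr
  refine ⟨⟨h.abelianFullSubcategory d r hr⟩, fun _ _ _ _ _ hfg => h.ssOfSlope_of_sse d r hr hfg,
    fun _ _ hA hB _ => ⟨fun _ _ _ ⟨hc⟩ => ?_, fun _ _ _ ⟨hc⟩ => ?_⟩⟩
  · exact ObjectProperty.prop_of_isLimit_kernelFork _ hc hA hB
  · exact ObjectProperty.prop_of_isColimit_cokernelCofork _ hc hA hB
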